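/- The assignment Γ ↦ ℓ(Γ), where ℓ(Γ) is the one-vertex graph with dart set the underlying set of Γ and dart-reversing involution a ↦ a⁻¹, extends to a functor ℓ : Grp → Graph which is a right adjoint; its left adjoint F_ℓ : Graph → Grp sends a graph G to the group presented by generators D(G) and relations d · λ(d) = 1 for all darts d. -/

import Mathlib

open CategoryTheory

structure Graph' where
  V : Type
  D : Type
  s : D → V
  t : D → V
  inv : D → D
  inv_inv : ∀ d, inv (inv d) = d
  s_inv : ∀ d, s (inv d) = t d

@[ext]
structure GraphHom (G H : Graph') where
  fV : G.V → H.V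
  fD : G.D → H.D
  map_s : ∀ d, H.s (fD d) = fV (G.s d)
  map_t : ∀ d, H.t (fD d) = fV (G.t d)
  map_inv : ∀ d, H.inv (fD d) = fD (G.inv d)

instance : Category Graph' where
  Hom := GraphHom
  id G := ⟨id, id, fun _ => rfl, fun _ => rfl, fun _ => rfl⟩
  comp f g := ⟨g.fV ∘ f.fV, g.fD ∘ f.fD,
    fun d => by simp [g.map_s, f.map_s],
    fun d => by simp [g.map_t, f.map_t],
    fun d => by simp [g.map_inv, f.map_inv]⟩


/-- The one-vertex graph `ℓ(Γ)` with darts the elements of `Γ` and `λ(a) = a⁻¹`. -/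
def ellGraph (Γ : Type) [Group Γ] : Graph' where
  V := PUnit
  D := Γ
  s := fun _ => PUnit.unit
  t := fun _ => PUnit.unit
  inv := fun a => a⁻¹
  inv_inv := fun a => inv_inv a
  s_inv := fun _ => rfl

/-- The functor `ℓ : Grp → Graph'`. -/
def ellFunctor : GrpCat.{0} ⥤ Graph' where
  obj Γ := ellGraph Γ
  map {Γ Γ'} h :=
    ⟨fun _ => PUnit.unit, fun a => h a, fun _ => rfl, fun _ => rfl,
      fun a => by
        exact (map_inv (show ↑Γ →* ↑Γ' from h.hom) (show ↑Γ from a)).symm⟩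

/-!
A homomorphism from the group presented by generators `D(G)` and relations `d · λ(d) = 1` to `Γ`
is the same as a map `f : D(G) → Γ` with `f (λ d) = (f d)⁻¹`, and, `ℓ(Γ)` having a single vertex,
so is a graph morphism `G ⟶ ℓ(Γ)`. This bijection is natural in `Γ`, and a hom-bijection natural
in the second variable determines a left adjoint with the prescribed value on objects.
-/

namespace Graph'

variable (G : Graph') {Γ : Type} [Group Γ]

def dartRelations : Set (FreeGroup G.D) :=
  {r | ∃ d, r = FreeGroup.of d * FreeGroup.of (G.inv d)}

abbrev dartGroup : Type := PresentedGroup G.dartRelations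

def DartInvMap (Γ : Type) [Group Γ] : Type :=
  {f : G.D → Γ // ∀ d, (f d)⁻¹ = f (G.inv d)}

variable {G} in
theorem lift_dartRelations_eq_one (f : G.DartInvMap Γ) :
    ∀ r ∈ G.dartRelations, FreeGroup.lift f.1 r = 1 := by
  rintro _ ⟨d, rfl⟩
  simp [← f.2]

variable {G} in
theorem dartGroup_of_mul_of_inv (d : G.D) :
    (PresentedGroup.of d : G.dartGroup) * PresentedGroup.of (G.inv d) = 1 :=
  PresentedGroup.one_of_mem ⟨d, rfl⟩

def dartGroupHomEquiv : (G.dartGroup →* Γ) ≃ G.DartInvMap Γ where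
  toFun φ := ⟨fun d => φ (.of d), fun d =>
    inv_eq_of_mul_eq_one_right (by rw [← map_mul, dartGroup_of_mul_of_inv, map_one])⟩
  invFun f := PresentedGroup.toGroup (lift_dartRelations_eq_one f)
  left_inv φ := PresentedGroup.ext fun _ => PresentedGroup.toGroup.of _
  right_inv f := Subtype.ext <| funext fun _ => PresentedGroup.toGroup.of _

def homEllGraphEquiv : (G ⟶ ellGraph Γ) ≃ G.DartInvMap Γ where
  toFun ψ := ⟨ψ.fD, ψ.map_inv⟩
  invFun f := ⟨fun _ => PUnit.unit, f.1, fun _ => rfl, fun _ => rfl, f.2⟩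
  left_inv _ := rfl
  right_inv _ := rfl

def dartGroupAdjunctionHomEquiv (Γ : GrpCat.{0}) :
    (GrpCat.of G.dartGroup ⟶ Γ) ≃ (G ⟶ ellFunctor.obj Γ) :=
  ConcreteCategory.homEquiv.trans (G.dartGroupHomEquiv.trans G.homEllGraphEquiv.symm)

theorem dartGroupAdjunctionHomEquiv_comp {Γ Γ' : GrpCat.{0}} (g : Γ ⟶ Γ')
    (h : GrpCat.of G.dartGroup ⟶ Γ) :
    G.dartGroupAdjunctionHomEquiv Γ' (h ≫ g) =
      G.dartGroupAdjunctionHomEquiv Γ h ≫ ellFunctor.map g :=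
  rfl

end Graph'

def dartGroupFunctor : Graph' ⥤ GrpCat.{0} :=
  Adjunction.leftAdjointOfEquiv Graph'.dartGroupAdjunctionHomEquiv
    fun G _ _ => G.dartGroupAdjunctionHomEquiv_comp

def dartGroupAdjunction : dartGroupFunctor ⊣ ellFunctor :=
  Adjunction.adjunctionOfEquivLeft _ _

/-- `ℓ` is a right adjoint, with left adjoint sending a graph `G` to the
group presented by generators `D(G)` and relations `d · λ(d) = 1`. -/
theorem ellFunctor_isRightAdjoint :
    ∃ F : Graph' ⥤ GrpCat.{0}, Nonempty (F ⊣ ellFunctor) ∧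
      ∀ G : Graph', Nonempty
        (F.obj G ≅ GrpCat.of (PresentedGroup
          {r : FreeGroup G.D | ∃ d, r = FreeGroup.of d * FreeGroup.of (G.inv d)})) :=
  ⟨dartGroupFunctor, ⟨dartGroupAdjunction⟩, fun _ => ⟨Iso.refl _⟩⟩
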